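/- arXiv:chao-dyn/9701020 — 7 statements merged into one kernel-verified Lean document; each statement's English description precedes it below -/
import Mathlib

section
/- For any a, b in (0,1), the integral of ln(x/(1-x)) from a to b satisfies ∫_a^b ln(x/(1-x)) dx ≤ (b-a)·ln(b/(1-b)) − 2(b-a)². -/
/-!
The logit `log (x / (1 - x))` has derivative `1 / (x (1 - x)) ≥ 4` on `(0, 1)`, so
`g x = log (x / (1 - x)) - 4 x` is monotone there. For a monotone `g`,
`∫ x in a..b, g x ≤ (b - a) g b` whatever the order of `a` and `b`; adding back
`∫ x in a..b, 4 x = 2 (b² - a²)` gives the bound.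
-/

open Set intervalIntegral Real

theorem MonotoneOn.intervalIntegral_le_sub_mul_right {g : ℝ → ℝ} {a b : ℝ}
    (hg : MonotoneOn g (uIcc a b)) : ∫ x in a..b, g x ≤ (b - a) * g b := by
  rcases le_total a b with hab | hba
  · calc ∫ x in a..b, g x ≤ ∫ _ in a..b, g b :=
          integral_mono_on hab hg.intervalIntegrable intervalIntegrable_const fun x hx =>
            hg (Icc_subset_uIcc hx) right_mem_uIcc hx.2
      _ = (b - a) * g b := by rw [integral_const, smul_eq_mul]
  · have hg' : MonotoneOn g (uIcc b a) := uIcc_comm a b ▸ hg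
    have : (a - b) * g b ≤ ∫ x in b..a, g x :=
      calc (a - b) * g b = ∫ _ in b..a, g b := by rw [integral_const, smul_eq_mul]
        _ ≤ ∫ x in b..a, g x :=
          integral_mono_on hba intervalIntegrable_const hg'.intervalIntegrable fun x hx =>
            hg' left_mem_uIcc (Icc_subset_uIcc hx) hx.1
    rw [integral_symm]
    linarith

theorem hasDerivAt_log_div_one_sub {x : ℝ} (hx₀ : x ≠ 0) (hx₁ : x ≠ 1) :
    HasDerivAt (fun x => log (x / (1 - x))) (1 / (x * (1 - x))) x := by
  have h₁ : 1 - x ≠ 0 := sub_ne_zero.mpr (Ne.symm hx₁)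
  have hdiv : HasDerivAt (fun x => x / (1 - x)) (1 / (1 - x) ^ 2) x :=
    ((hasDerivAt_id' x).fun_div ((hasDerivAt_id' x).const_sub 1) h₁).congr_deriv (by ring)
  convert hdiv.log (div_ne_zero hx₀ h₁) using 1
  field_simp

theorem monotoneOn_log_div_one_sub_sub_four_mul :
    MonotoneOn (fun x => log (x / (1 - x)) - 4 * x) (Ioo 0 1) := by
  have hderiv : ∀ x ∈ Ioo (0 : ℝ) 1,
      HasDerivAt (fun x => log (x / (1 - x)) - 4 * x) (1 / (x * (1 - x)) - 4) x :=
    fun x hx => (hasDerivAt_log_div_one_sub hx.1.ne' hx.2.ne).sub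
      (by simpa using (hasDerivAt_id x).const_mul 4)
  refine monotoneOn_of_hasDerivWithinAt_nonneg (convex_Ioo 0 1)
    (fun x hx => (hderiv x hx).continuousAt.continuousWithinAt)
    (fun x hx => (hderiv x (interior_subset hx)).hasDerivWithinAt) fun x hx => ?_
  rw [interior_Ioo] at hx
  have hx₁ : 0 < 1 - x := sub_pos.mpr hx.2
  rw [sub_nonneg, le_div_iff₀ (mul_pos hx.1 hx₁)]
  nlinarith [sq_nonneg (2 * x - 1)]

theorem stmt_1 (a b : ℝ) (ha : a ∈ Set.Ioo (0:ℝ) 1) (hb : b ∈ Set.Ioo (0:ℝ) 1) :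
    ∫ x in a..b, Real.log (x / (1 - x)) ≤
      (b - a) * Real.log (b / (1 - b)) - 2 * (b - a)^2 := by
  set g : ℝ → ℝ := fun x => log (x / (1 - x)) - 4 * x
  have hg : MonotoneOn g (uIcc a b) :=
    monotoneOn_log_div_one_sub_sub_four_mul.mono (ordConnected_Ioo.uIcc_subset ha hb)
  have hsplit :
      ∫ x in a..b, log (x / (1 - x)) = (∫ x in a..b, g x) + 2 * (b ^ 2 - a ^ 2) := by
    rw [← integral_congr fun x _ => show g x + 4 * x = log (x / (1 - x)) by simp [g],
      integral_add hg.intervalIntegrable (intervalIntegrable_id.const_mul 4),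
      integral_const_mul, integral_id]
    ring
  have hle : ∫ x in a..b, g x ≤ (b - a) * (log (b / (1 - b)) - 4 * b) :=
    hg.intervalIntegral_le_sub_mul_right
  linarith
end

section
/- Let W be an n×n real matrix, K and Z real diagonal matrices with Z having nonnegative diagonal entries, and let √Z denote the diagonal matrix of square roots of the entries of Z. Then the matrices K + Z·W and K + √Z·W·√Z have the same characteristic polynomial, hence the same eigenvalues. -/
/-!
With `S = √Z` and `N = S W` the two matrices are `K + S N` and `K + N S`, so it suffices that
`det (D + G N) = det (D + N G)` for diagonal `D`, `G` (applied to `D = X - K`). In the Leibniz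
expansion the term of a permutation `σ` agrees on the fixed points of `σ`; on its support `D`
vanishes and the term carries the factors `g (σ i)` resp. `g i`, whose products agree because
`σ` permutes its support.
-/

open Matrix Finset Polynomial

variable {n R : Type*} [Fintype n] [DecidableEq n] [CommRing R]

namespace Matrix

theorem prod_diagonal_add_diagonal_mul_perm_apply (d g : n → R) (N : Matrix n n R)
    (σ : Equiv.Perm n) :
    ∏ i, (diagonal d + diagonal g * N) (σ i) i = ∏ i, (diagonal d + N * diagonal g) (σ i) i := by
  rw [← prod_mul_prod_compl σ.support, ← prod_mul_prod_compl σ.support]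
  congr 1
  · have hmoved : ∀ i ∈ σ.support, ∀ c : R, diagonal d (σ i) i + c = c := fun i hi c => by
      rw [diagonal_apply_ne _ (Equiv.Perm.mem_support.mp hi), zero_add]
    calc ∏ i ∈ σ.support, (diagonal d + diagonal g * N) (σ i) i
        = (∏ i ∈ σ.support, g (σ i)) * ∏ i ∈ σ.support, N (σ i) i := by
          rw [← prod_mul_distrib]
          refine prod_congr rfl fun i hi => ?_
          rw [add_apply, diagonal_mul, hmoved i hi]
      _ = (∏ i ∈ σ.support, N (σ i) i) * ∏ i ∈ σ.support, g i := by
          rw [σ.prod_comp _ _ (fun i hi => σ.mem_support.mpr hi), mul_comm]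
      _ = ∏ i ∈ σ.support, (diagonal d + N * diagonal g) (σ i) i := by
          rw [← prod_mul_distrib]
          refine prod_congr rfl fun i hi => ?_
          rw [add_apply, mul_diagonal, hmoved i hi]
  · refine prod_congr rfl fun i hi => ?_
    rw [Equiv.Perm.notMem_support.mp (mem_compl.mp hi)]
    simp only [add_apply, diagonal_mul, mul_diagonal, mul_comm]

theorem det_diagonal_add_diagonal_mul_comm (d g : n → R) (N : Matrix n n R) :
    (diagonal d + diagonal g * N).det = (diagonal d + N * diagonal g).det := by
  simp only [det_apply', prod_diagonal_add_diagonal_mul_perm_apply]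

theorem charmatrix_diagonal_add (k : n → R) (M : Matrix n n R) :
    charmatrix (diagonal k + M) = diagonal (fun i => X - C (k i)) - M.map C := by
  ext i j : 1
  rcases eq_or_ne i j with rfl | hij
  · simp only [charmatrix_apply_eq, add_apply, diagonal_apply_eq, map_add, sub_apply, map_apply]
    ring
  · simp [hij]

theorem charpoly_diagonal_add_diagonal_mul_comm (k g : n → R) (N : Matrix n n R) :
    (diagonal k + diagonal g * N).charpoly = (diagonal k + N * diagonal g).charpoly := by
  rw [charpoly, charpoly, charmatrix_diagonal_add, charmatrix_diagonal_add, Matrix.map_mul,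
    Matrix.map_mul, diagonal_map (map_zero C), sub_eq_add_neg, sub_eq_add_neg, ← neg_mul,
    ← mul_neg, diagonal_neg, det_diagonal_add_diagonal_mul_comm]

end Matrix

theorem stmt_4 {n : ℕ} (W : Matrix (Fin n) (Fin n) ℝ) (k z : Fin n → ℝ)
    (hz : ∀ i, 0 ≤ z i) :
    (Matrix.diagonal k + Matrix.diagonal z * W).charpoly =
      (Matrix.diagonal k +
        Matrix.diagonal (fun i => Real.sqrt (z i)) * W *
          Matrix.diagonal (fun i => Real.sqrt (z i))).charpoly := by
  have hsq : diagonal z = diagonal (fun i => √(z i)) * diagonal (fun i => √(z i)) := by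
    rw [diagonal_mul_diagonal]
    exact congrArg diagonal (funext fun i => (Real.mul_self_sqrt (hz i)).symm)
  rw [hsq, mul_assoc, charpoly_diagonal_add_diagonal_mul_comm]
end

section
/- Let W be a symmetric real n×n matrix, K a real diagonal matrix, and Z a diagonal matrix with nonnegative real entries. Then all eigenvalues of K + Z·W are real. -/
/-!
Let `v` be an eigenvector of `K + Z W` for `μ`. If `v i ≠ 0` at some `i` with `z i = 0`, row `i`
of the eigen-equation reads `k i * v i = μ * v i`, so `μ = k i`. Otherwise `v` is supported where
`Z` is invertible, and multiplying by `Z⁻¹` gives `v* (Z⁻¹ K + W) v = μ · v* Z⁻¹ v`: both forms are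
Hermitian, hence real, and the right one is positive, so `μ` is real.
-/

open Matrix

variable {ι : Type*}

theorem Matrix.IsSymm.isHermitian_map_ofReal {A : Matrix ι ι ℝ} (hA : A.IsSymm) :
    (A.map (algebraMap ℝ ℂ)).IsHermitian :=
  (isHermitian_iff_isSymm.mpr hA).map _ fun x => (Complex.conj_ofReal x).symm

variable [Fintype ι]

theorem Matrix.IsHermitian.star_dotProduct_mul_mulVec {α : Type*} [CommSemiring α] [StarRing α]
    {P : Matrix ι ι α} (hP : P.IsHermitian) (A : Matrix ι ι α) {v : ι → α} (hv : P *ᵥ v = v) :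
    star v ⬝ᵥ (P * A) *ᵥ v = star v ⬝ᵥ A *ᵥ v := by
  rw [← mulVec_mulVec, dotProduct_mulVec, ← hP.eq, ← star_mulVec, hv]

theorem Matrix.IsHermitian.im_eq_zero_of_star_dotProduct_mulVec_eq_mul {A B : Matrix ι ι ℂ}
    (hA : A.IsHermitian) (hB : B.IsHermitian) {v : ι → ℂ} {μ : ℂ}
    (h : star v ⬝ᵥ A *ᵥ v = μ * (star v ⬝ᵥ B *ᵥ v)) (hB0 : star v ⬝ᵥ B *ᵥ v ≠ 0) : μ.im = 0 := by
  have hAim : (star v ⬝ᵥ A *ᵥ v).im = 0 := hA.im_star_dotProduct_mulVec_self v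
  have hBim : (star v ⬝ᵥ B *ᵥ v).im = 0 := hB.im_star_dotProduct_mulVec_self v
  have hBre : (star v ⬝ᵥ B *ᵥ v).re ≠ 0 := fun hre => hB0 (Complex.ext hre hBim)
  have him := congrArg Complex.im h
  rw [Complex.mul_im, hAim, hBim, mul_zero, zero_add] at him
  exact (mul_eq_zero.mp him.symm).resolve_right hBre

variable [DecidableEq ι]

theorem Matrix.exists_mulVec_eq_smul_of_isRoot_charpoly {K : Type*} [Field K]
    {M : Matrix ι ι K} {μ : K} (hμ : M.charpoly.IsRoot μ) : ∃ v ≠ 0, M *ᵥ v = μ • v := by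
  have hμ' : Module.End.HasEigenvalue M.toLin' μ := by
    rwa [Module.End.hasEigenvalue_iff_isRoot_charpoly, Matrix.charpoly_toLin']
  obtain ⟨v, hv⟩ := hμ'.exists_hasEigenvector
  exact ⟨v, hv.2, by simpa using hv.apply_eq_smul⟩

theorem mulVec_map_diagonal_add_diagonal_mul_apply (W : Matrix ι ι ℝ) (k z : ι → ℝ) (v : ι → ℂ)
    (i : ι) :
    ((diagonal k + diagonal z * W).map (algebraMap ℝ ℂ) *ᵥ v) i
      = k i * v i + z i * (W.map (algebraMap ℝ ℂ) *ᵥ v) i := by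
  rw [Matrix.map_add (f := algebraMap ℝ ℂ) (map_add _), Matrix.map_mul, diagonal_map (map_zero _),
    diagonal_map (map_zero _), add_mulVec, ← mulVec_mulVec]
  simp only [Pi.add_apply, mulVec_diagonal]
  rfl

theorem diagonal_inv_mul_diagonal_add_diagonal_mul (W : Matrix ι ι ℝ) (k z : ι → ℝ) :
    diagonal z⁻¹ * (diagonal k + diagonal z * W) =
      diagonal (z⁻¹ * k) + diagonal (z⁻¹ * z) * W := by
  rw [mul_add, diagonal_mul_diagonal, ← mul_assoc, diagonal_mul_diagonal]
  rfl

theorem star_dotProduct_map_diagonal_mulVec (d : ι → ℝ) (v : ι → ℂ) :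
    star v ⬝ᵥ (diagonal d).map (algebraMap ℝ ℂ) *ᵥ v =
      ((∑ i, d i * Complex.normSq (v i) : ℝ) : ℂ) := by
  rw [diagonal_map (map_zero _)]
  push_cast [dotProduct, mulVec_diagonal, ← Complex.mul_conj]
  refine Finset.sum_congr rfl fun i _ => ?_
  simp only [Pi.star_apply, Complex.star_def, Complex.coe_algebraMap]
  ring

theorem im_eq_zero_of_mulVec_eq_smul_of_forall_eq_zero {W : Matrix ι ι ℝ} (hW : W.IsSymm)
    (k : ι → ℝ) {z : ι → ℝ} (hz : ∀ i, 0 ≤ z i) {v : ι → ℂ} (hv : v ≠ 0)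
    (hsupp : ∀ i, z i = 0 → v i = 0)
    {μ : ℂ} (hμ : (diagonal k + diagonal z * W).map (algebraMap ℝ ℂ) *ᵥ v = μ • v) : μ.im = 0 := by
  -- `z⁻¹ * z` is the indicator of the support of `z`, since `0⁻¹ = 0`.
  have hPv : (diagonal (z⁻¹ * z)).map (algebraMap ℝ ℂ) *ᵥ v = v := by
    ext i
    rw [diagonal_map (map_zero _), mulVec_diagonal]
    by_cases hzi : z i = 0
    · simp [hsupp i hzi]
    · simp [hzi]
  have hweight : star v ⬝ᵥ (diagonal z⁻¹).map (algebraMap ℝ ℂ) *ᵥ v ≠ 0 := by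
    obtain ⟨i, hi⟩ := Function.ne_iff.mp hv
    have hzi : 0 < z i := (hz i).lt_of_ne' fun h => hi (hsupp i h)
    rw [star_dotProduct_map_diagonal_mulVec, Complex.ofReal_ne_zero]
    refine (Finset.sum_pos'
      (fun j _ => mul_nonneg (inv_nonneg.mpr (hz j)) (Complex.normSq_nonneg _))
      ⟨i, Finset.mem_univ i, mul_pos (inv_pos.mpr hzi) (Complex.normSq_pos.mpr hi)⟩).ne'
  have hA := ((isSymm_diagonal (z⁻¹ * k)).add hW).isHermitian_map_ofReal
  refine hA.im_eq_zero_of_star_dotProduct_mulVec_eq_mul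
    (isSymm_diagonal z⁻¹).isHermitian_map_ofReal ?_ hweight
  calc star v ⬝ᵥ (diagonal (z⁻¹ * k) + W).map (algebraMap ℝ ℂ) *ᵥ v
      = star v ⬝ᵥ (diagonal (z⁻¹ * k) + diagonal (z⁻¹ * z) * W).map (algebraMap ℝ ℂ) *ᵥ v := by
        simp only [Matrix.map_add (f := algebraMap ℝ ℂ) (map_add _), Matrix.map_mul, add_mulVec,
          dotProduct_add,
          (isSymm_diagonal _).isHermitian_map_ofReal.star_dotProduct_mul_mulVec _ hPv]
    _ = star v ⬝ᵥ (diagonal z⁻¹).map (algebraMap ℝ ℂ) *ᵥ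
          ((diagonal k + diagonal z * W).map (algebraMap ℝ ℂ) *ᵥ v) := by
        rw [mulVec_mulVec, ← Matrix.map_mul, diagonal_inv_mul_diagonal_add_diagonal_mul]
    _ = μ * (star v ⬝ᵥ (diagonal z⁻¹).map (algebraMap ℝ ℂ) *ᵥ v) := by
        rw [hμ, mulVec_smul, dotProduct_smul, smul_eq_mul]

theorem stmt_5 {n : ℕ} (W : Matrix (Fin n) (Fin n) ℝ) (hW : W.IsSymm)
    (k z : Fin n → ℝ) (hz : ∀ i, 0 ≤ z i) (μ : ℂ)
    (hμ : (((Matrix.diagonal k + Matrix.diagonal z * W).map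
        (algebraMap ℝ ℂ)).charpoly).IsRoot μ) :
    μ.im = 0 := by
  obtain ⟨v, hv, hMv⟩ := exists_mulVec_eq_smul_of_isRoot_charpoly hμ
  by_cases hsupp : ∀ i, z i = 0 → v i = 0
  · exact im_eq_zero_of_mulVec_eq_smul_of_forall_eq_zero hW k hz hv hsupp hMv
  · push Not at hsupp
    obtain ⟨i, hzi, hvi⟩ := hsupp
    have hrow := congrFun hMv i
    rw [mulVec_map_diagonal_add_diagonal_mul_apply, hzi, Complex.ofReal_zero, zero_mul, add_zero,
      Pi.smul_apply, smul_eq_mul] at hrow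
    rw [← mul_right_cancel₀ hvi hrow, Complex.ofReal_im]
end

section
/- Let W be a symmetric real n×n matrix and Z a diagonal matrix with strictly positive diagonal entries. Then all eigenvalues of Z·W are positive if and only if W is positive definite, and all eigenvalues of Z·W are negative if and only if W is negative definite. -/
/-!
Write the positive definite matrix `Z` as `Bᴴ B` with `B` invertible. Then `Z W = Bᴴ (B W)` has
the same characteristic polynomial as the Hermitian matrix `B W Bᴴ`, whose roots are its
eigenvalues, and `B W Bᴴ` is positive definite exactly when `W` is (Sylvester's law of inertia
in its simplest form). The negative case is the positive one applied to `-W`.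
-/

open Matrix Polynomial
open scoped ComplexOrder

namespace Matrix

variable {𝕜 n : Type*} [RCLike 𝕜] [Fintype n] [DecidableEq n]

theorem IsHermitian.isRoot_charpoly_iff {A : Matrix n n 𝕜} (hA : A.IsHermitian) (μ : 𝕜) :
    A.charpoly.IsRoot μ ↔ ∃ i, (hA.eigenvalues i : 𝕜) = μ := by
  simp only [hA.charpoly_eq, isRoot_prod, Finset.mem_univ, true_and, root_X_sub_C, eq_comm]

theorem IsHermitian.forall_isRoot_charpoly_pos_iff_posDef {A : Matrix n n 𝕜}
    (hA : A.IsHermitian) : (∀ μ : 𝕜, A.charpoly.IsRoot μ → 0 < μ) ↔ A.PosDef := by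
  simp only [hA.isRoot_charpoly_iff, forall_exists_index, forall_apply_eq_imp_iff,
    RCLike.ofReal_pos, hA.posDef_iff_eigenvalues_pos]

open scoped MatrixOrder in
theorem PosDef.exists_isUnit_eq_star_mul_self {P : Matrix n n 𝕜} (hP : P.PosDef) :
    ∃ B, IsUnit B ∧ P = star B * B :=
  CStarAlgebra.isStrictlyPositive_iff_eq_star_mul_self.mp hP.isStrictlyPositive

theorem PosDef.forall_isRoot_charpoly_mul_pos_iff {P A : Matrix n n 𝕜} (hP : P.PosDef)
    (hA : A.IsHermitian) :
    (∀ μ : 𝕜, (P * A).charpoly.IsRoot μ → 0 < μ) ↔ A.PosDef := by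
  obtain ⟨B, hB, rfl⟩ := hP.exists_isUnit_eq_star_mul_self
  have hBAB : (B * A * star B).IsHermitian := isHermitian_mul_mul_conjTranspose B hA
  rw [mul_assoc, charpoly_mul_comm, hBAB.forall_isRoot_charpoly_pos_iff_posDef,
    IsUnit.posDef_star_right_conjugate_iff hB]

theorem isRoot_charpoly_neg_iff {K : Type*} [Field K] (M : Matrix n n K) (μ : K) :
    (-M).charpoly.IsRoot μ ↔ M.charpoly.IsRoot (-μ) := by
  rw [← mem_spectrum_iff_isRoot_charpoly, ← mem_spectrum_iff_isRoot_charpoly,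
    ← spectrum.neg_eq, Set.mem_neg]

end Matrix

theorem stmt_7 {n : ℕ} (W : Matrix (Fin n) (Fin n) ℝ) (hW : W.IsSymm)
    (z : Fin n → ℝ) (hz : ∀ i, 0 < z i) :
    ((∀ μ : ℝ, ((Matrix.diagonal z * W).charpoly).IsRoot μ → 0 < μ) ↔ W.PosDef) ∧
    ((∀ μ : ℝ, ((Matrix.diagonal z * W).charpoly).IsRoot μ → μ < 0) ↔ (-W).PosDef) := by
  have hZ : (diagonal z).PosDef := posDef_diagonal_iff.mpr hz
  have hWh : W.IsHermitian := hW
  refine ⟨hZ.forall_isRoot_charpoly_mul_pos_iff hWh, ?_⟩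
  rw [← hZ.forall_isRoot_charpoly_mul_pos_iff hWh.neg, mul_neg, neg_surjective.forall]
  simp only [isRoot_charpoly_neg_iff, neg_lt_zero]
end

section
/- For the TCNN dynamics y_i(t+1) = k·y_i(t) + Σ_j ω_{ij}·σ(y_j(t)/ε) + a_i − ω_{ii}a_{0i} with σ the logistic sigmoid, if −1 < k < 1 then every trajectory Y(t) is bounded for any initial condition Y(0); moreover for t sufficiently large |y_i(t)| ≤ d_i/(1−|k|) where d_i = Σ_j |ω_{ij}| + |a_i − ω_{ii}a_{0i}|. -/
noncomputable def sigmoid (u : ℝ) : ℝ := 1 / (1 + Real.exp (-u))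

/-!
Writing `d_i = ∑ⱼ |ω_{ij}| + |a_i - ω_{ii} a_{0i}|`, the bound `|σ| ≤ 1` gives the scalar inequality
`|y_i(t+1)| ≤ |k| |y_i(t)| + d_i`. With `L = d_i / (1 - |k|)` this reads
`|y_i(t+1)| - L ≤ |k| (|y_i(t)| - L)`, so `|y_i(t)| - L ≤ |k|^t (|y_i(0)| - L)`, which is bounded
in `t` and tends to `0`.
-/

open Filter Topology

theorem sigmoid_eq_real_sigmoid (u : ℝ) : sigmoid u = Real.sigmoid u := by
  rw [sigmoid, one_div, Real.sigmoid_def]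

theorem abs_sigmoid_le_one (u : ℝ) : |sigmoid u| ≤ 1 := by
  rw [sigmoid_eq_real_sigmoid, abs_le]
  exact ⟨by linarith [Real.sigmoid_nonneg u], Real.sigmoid_le_one u⟩

theorem abs_sum_mul_le_sum_abs {ι : Type*} (s : Finset ι) (w g : ι → ℝ)
    (hg : ∀ j ∈ s, |g j| ≤ 1) : |∑ j ∈ s, w j * g j| ≤ ∑ j ∈ s, |w j| :=
  calc |∑ j ∈ s, w j * g j| ≤ ∑ j ∈ s, |w j * g j| := Finset.abs_sum_le_sum_abs _ _
    _ ≤ ∑ j ∈ s, |w j| := Finset.sum_le_sum fun j hj => by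
        rw [abs_mul]
        exact mul_le_of_le_one_right (abs_nonneg _) (hg j hj)

section AffineRecurrence

variable {u : ℕ → ℝ} {c L : ℝ}

theorem sub_le_pow_mul_of_le_affine (hc : 0 ≤ c)
    (hu : ∀ t, u (t + 1) ≤ c * u t + (1 - c) * L) (t : ℕ) :
    u t - L ≤ c ^ t * (u 0 - L) := by
  induction t with
  | zero => simp
  | succ t ih =>
    calc u (t + 1) - L ≤ c * (u t - L) := by linarith [hu t]
      _ ≤ c * (c ^ t * (u 0 - L)) := mul_le_mul_of_nonneg_left ih hc
      _ = c ^ (t + 1) * (u 0 - L) := by ring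

theorem exists_forall_le_of_le_affine (hc : 0 ≤ c) (hc1 : c < 1)
    (hu : ∀ t, u (t + 1) ≤ c * u t + (1 - c) * L) : ∃ M, ∀ t, u t ≤ M := by
  refine ⟨L + |u 0 - L|, fun t => ?_⟩
  have hpow : c ^ t * (u 0 - L) ≤ |u 0 - L| :=
    calc c ^ t * (u 0 - L) ≤ c ^ t * |u 0 - L| :=
          mul_le_mul_of_nonneg_left (le_abs_self _) (pow_nonneg hc t)
      _ ≤ |u 0 - L| := mul_le_of_le_one_left (abs_nonneg _) (pow_le_one₀ hc hc1.le)
  linarith [sub_le_pow_mul_of_le_affine hc hu t]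

theorem eventually_le_add_of_le_affine (hc : 0 ≤ c) (hc1 : c < 1)
    (hu : ∀ t, u (t + 1) ≤ c * u t + (1 - c) * L) {δ : ℝ} (hδ : 0 < δ) :
    ∀ᶠ t in atTop, u t ≤ L + δ := by
  have hlim : Tendsto (fun t => c ^ t * (u 0 - L)) atTop (𝓝 0) := by
    simpa using (tendsto_pow_atTop_nhds_zero_of_lt_one hc hc1).mul_const (u 0 - L)
  filter_upwards [hlim.eventually_lt_const hδ] with t ht
  linarith [sub_le_pow_mul_of_le_affine hc hu t]

end AffineRecurrence

theorem abs_tcnn_step_le {n : ℕ} (ω : Matrix (Fin n) (Fin n) ℝ) (a a0 x : Fin n → ℝ)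
    (k ε : ℝ) (i : Fin n) :
    |k * x i + (∑ j, ω i j * sigmoid (x j / ε)) + a i - ω i i * a0 i| ≤
      |k| * |x i| + ((∑ j, |ω i j|) + |a i - ω i i * a0 i|) := by
  have hsum := abs_sum_mul_le_sum_abs Finset.univ (ω i) (fun j => sigmoid (x j / ε))
    fun j _ => abs_sigmoid_le_one _
  calc |k * x i + (∑ j, ω i j * sigmoid (x j / ε)) + a i - ω i i * a0 i|
      = |k * x i + (∑ j, ω i j * sigmoid (x j / ε)) + (a i - ω i i * a0 i)| := by
        rw [add_sub_assoc]
    _ ≤ |k * x i| + |∑ j, ω i j * sigmoid (x j / ε)| + |a i - ω i i * a0 i| :=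
        abs_add_three _ _ _
    _ ≤ |k| * |x i| + ((∑ j, |ω i j|) + |a i - ω i i * a0 i|) := by
        rw [abs_mul]; linarith

theorem stmt_11_general {n : ℕ} (ω : Matrix (Fin n) (Fin n) ℝ) (a a0 : Fin n → ℝ)
    (k ε : ℝ) (hk : |k| < 1)
    (y : ℕ → Fin n → ℝ)
    (hy : ∀ t i, y (t + 1) i =
      k * y t i + (∑ j, ω i j * sigmoid (y t j / ε)) + a i - ω i i * a0 i) :
    (∃ M : ℝ, ∀ t i, |y t i| ≤ M) ∧
    ∀ δ > (0:ℝ), ∃ T : ℕ, ∀ t ≥ T, ∀ i,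
      |y t i| ≤ ((∑ j, |ω i j|) + |a i - ω i i * a0 i|) / (1 - |k|) + δ := by
  have hk0 : 0 ≤ |k| := abs_nonneg k
  have hu : ∀ i t, |y (t + 1) i| ≤
      |k| * |y t i| + (1 - |k|) * (((∑ j, |ω i j|) + |a i - ω i i * a0 i|) / (1 - |k|)) := by
    intro i t
    rw [mul_div_cancel₀ _ (sub_ne_zero.mpr hk.ne'), hy]
    exact abs_tcnn_step_le ω a a0 (y t) k ε i
  constructor
  · choose M hM using fun i => exists_forall_le_of_le_affine (u := fun t => |y t i|) hk0 hk (hu i)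
    obtain ⟨M', hM'⟩ := Finite.exists_le M
    exact ⟨M', fun t i => (hM i t).trans (hM' i)⟩
  · intro δ hδ
    obtain ⟨T, hT⟩ := eventually_atTop.mp
      (eventually_all.mpr fun i => eventually_le_add_of_le_affine (u := fun t => |y t i|) hk0 hk (hu i) hδ)
    exact ⟨T, fun t ht i => hT t ht i⟩

theorem stmt_11 {n : ℕ} (ω : Matrix (Fin n) (Fin n) ℝ) (a a0 : Fin n → ℝ)
    (k ε : ℝ) (hk : |k| < 1) (hε : 0 < ε)
    (y : ℕ → Fin n → ℝ)
    (hy : ∀ t i, y (t + 1) i =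
      k * y t i + (∑ j, ω i j * sigmoid (y t j / ε)) + a i - ω i i * a0 i) :
    (∃ M : ℝ, ∀ t i, |y t i| ≤ M) ∧
    ∀ δ > (0:ℝ), ∃ T : ℕ, ∀ t ≥ T, ∀ i,
      |y t i| ≤ ((∑ j, |ω i j|) + |a i - ω i i * a0 i|) / (1 - |k|) + δ :=
  stmt_11_general ω a a0 k ε hk y hy
end

section
/- (Urabe) Let F : ℝⁿ → ℝⁿ be C¹ on a region Ω, and suppose Ȳ ∈ Ω satisfies: det F_Y(Ȳ) ≠ 0, ‖F(Ȳ)‖ < r, ‖F_Y(Ȳ)⁻¹‖ < d, the ball Ω_ε = {Y : ‖Y−Ȳ‖ < ε} ⊂ Ω, ‖F_Y(Y) − F_Y(Ȳ)‖ < μ/d for all Y ∈ Ω_ε with 0 ≤ μ < 1, and rd/(1−μ) < ε. Then F(Y) = 0 has exactly one solution Y* in Ω_ε, and ‖Ȳ − Y*‖ ≤ rd/(1−μ). -/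
/-!
The residual `F Y - J (Y - Ȳ)` is `(μ / d)`-Lipschitz on `Ω_ε` by the mean value inequality,
i.e. `F` approximates the invertible linear map `J = F_Y(Ȳ)` there. Newton's chord iteration
`Y ↦ Y - J⁻¹ F(Y)` is then a `μ`-contraction, so `F` maps the closed ball of radius
`ρ = r d / (1 - μ)` about `Ȳ` onto a ball of radius `(1 - μ) ρ / d = r` about `F(Ȳ)`, which
contains `0`; the same estimate makes `F` injective on `Ω_ε`.
-/

open Metric Set

open scoped NNReal

theorem Convex.approximatesLinearOn_of_norm_hasFDerivWithin_sub_le {E F : Type*}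
    [NormedAddCommGroup E] [NormedSpace ℝ E] [NormedAddCommGroup F] [NormedSpace ℝ F] {f : E → F}
    {f' : E → E →L[ℝ] F} {φ : E →L[ℝ] F} {s : Set E} {c : ℝ≥0} (hs : Convex ℝ s)
    (hf : ∀ x ∈ s, HasFDerivWithinAt f (f' x) s x) (bound : ∀ x ∈ s, ‖f' x - φ‖ ≤ c) :
    ApproximatesLinearOn f φ s c :=
  fun _ hx _ hy => hs.norm_image_sub_le_of_norm_hasFDerivWithin_le' hf bound hy hx

namespace ApproximatesLinearOn

variable {𝕜 E F : Type*} [NontriviallyNormedField 𝕜] [NormedAddCommGroup E] [NormedSpace 𝕜 E]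
  [NormedAddCommGroup F] [NormedSpace 𝕜 F] {f : E → F} {f' : E ≃L[𝕜] F} {s : Set E} {c : ℝ≥0}

/-- Unlike `ApproximatesLinearOn.injOn`, the hypothesis is a product, so the trivial space needs
no separate case (there `‖f'⁻¹‖⁻¹` takes the junk value `0`). -/
theorem injOn_of_norm_symm_mul_lt_one (hf : ApproximatesLinearOn f (f' : E →L[𝕜] F) s c)
    (hc : ‖(f'.symm : F →L[𝕜] E)‖ * c < 1) : InjOn f s := by
  intro x hx y hy hxy
  have hle : ‖x - y‖ ≤ ‖(f'.symm : F →L[𝕜] E)‖ * c * ‖x - y‖ :=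
    calc ‖x - y‖ = ‖(f'.symm : F →L[𝕜] E) (f' (x - y))‖ := by simp
      _ ≤ ‖(f'.symm : F →L[𝕜] E)‖ * ‖f x - f y - f' (x - y)‖ := by
          rw [hxy, sub_self, zero_sub, norm_neg]
          exact ContinuousLinearMap.le_opNorm _ _
      _ ≤ ‖(f'.symm : F →L[𝕜] E)‖ * (c * ‖x - y‖) := by gcongr; exact hf x hx y hy
      _ = ‖(f'.symm : F →L[𝕜] E)‖ * c * ‖x - y‖ := by ring
  have hnorm : ‖x - y‖ = 0 := by nlinarith [norm_nonneg (x - y)]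
  rwa [norm_eq_zero, sub_eq_zero] at hnorm

theorem surjOn_closedBall_of_norm_symm_le [CompleteSpace E]
    (hf : ApproximatesLinearOn f (f' : E →L[𝕜] F) s c) {d : ℝ≥0}
    (hd : ‖(f'.symm : F →L[𝕜] E)‖₊ ≤ d) {ε : ℝ} {b : E} (ε0 : 0 ≤ ε)
    (hε : closedBall b ε ⊆ s) :
    SurjOn f (closedBall b ε) (closedBall (f b) (((d : ℝ)⁻¹ - c) * ε)) :=
  hf.surjOn_closedBall_of_nonlinearRightInverse
    { toFun := f'.symm
      nnnorm := d
      bound' := fun y => ((f'.symm : F →L[𝕜] E).le_opNorm y).trans (by gcongr; exact hd)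
      right_inv' := f'.apply_symm_apply } ε0 hε

end ApproximatesLinearOn

theorem stmt_15_general {n : ℕ}
    (F : EuclideanSpace ℝ (Fin n) → EuclideanSpace ℝ (Fin n))
    (F' : EuclideanSpace ℝ (Fin n) →
      EuclideanSpace ℝ (Fin n) →L[ℝ] EuclideanSpace ℝ (Fin n))
    (Ω : Set (EuclideanSpace ℝ (Fin n)))
    (hF' : ∀ Y ∈ Ω, HasFDerivAt F (F' Y) Y)
    (Ybar : EuclideanSpace ℝ (Fin n))
    (J : EuclideanSpace ℝ (Fin n) ≃L[ℝ] EuclideanSpace ℝ (Fin n))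
    (hJ : (J : EuclideanSpace ℝ (Fin n) →L[ℝ] EuclideanSpace ℝ (Fin n)) = F' Ybar)
    (r d ε μ : ℝ) (hr : 0 < r) (hd : 0 < d) (hμ0 : 0 ≤ μ) (hμ1 : μ < 1)
    (hFnorm : ‖F Ybar‖ < r)
    (hinv : ‖(J.symm : EuclideanSpace ℝ (Fin n) →L[ℝ] EuclideanSpace ℝ (Fin n))‖ < d)
    (hball : Metric.ball Ybar ε ⊆ Ω)
    (hLip : ∀ Y ∈ Metric.ball Ybar ε, ‖F' Y - F' Ybar‖ < μ / d)
    (hrd : r * d / (1 - μ) < ε) :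
    ∃ Ystar ∈ Metric.ball Ybar ε,
      F Ystar = 0 ∧ ‖Ybar - Ystar‖ ≤ r * d / (1 - μ) ∧
      ∀ Y ∈ Metric.ball Ybar ε, F Y = 0 → Y = Ystar := by
  set ρ := r * d / (1 - μ)
  have hρ : 0 ≤ ρ := div_nonneg (mul_pos hr hd).le (sub_pos.2 hμ1).le
  let c : ℝ≥0 := ⟨μ / d, div_nonneg hμ0 hd.le⟩
  have hc : (c : ℝ) = μ / d := rfl
  have happrox : ApproximatesLinearOn F (J : _ →L[ℝ] _) (ball Ybar ε) c :=
    (convex_ball Ybar ε).approximatesLinearOn_of_norm_hasFDerivWithin_sub_le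
      (fun Y hY => (hF' Y (hball hY)).hasFDerivWithinAt)
      (fun Y hY => hJ ▸ (hLip Y hY).le)
  have hradius : ((d : ℝ)⁻¹ - c) * ρ = r := by
    simp only [hc, ρ]
    field_simp [(sub_pos.2 hμ1).ne']
  have hzero : (0 : EuclideanSpace ℝ (Fin n)) ∈ closedBall (F Ybar) (((d : ℝ)⁻¹ - c) * ρ) := by
    rw [hradius, mem_closedBall, dist_comm, dist_zero_right]
    exact hFnorm.le
  obtain ⟨Ystar, hYstar, hFYstar⟩ :=
    happrox.surjOn_closedBall_of_norm_symm_le (d := ⟨d, hd.le⟩) hinv.le hρ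
      (closedBall_subset_ball hrd) hzero
  have hinj : InjOn F (ball Ybar ε) :=
    happrox.injOn_of_norm_symm_mul_lt_one <|
      calc _ ≤ d * (μ / d) := hc ▸ mul_le_mul_of_nonneg_right hinv.le c.2
        _ = μ := by field_simp
        _ < 1 := hμ1
  refine ⟨Ystar, closedBall_subset_ball hrd hYstar, hFYstar, ?_, ?_⟩
  · rw [← dist_eq_norm, dist_comm]
    exact hYstar
  · exact fun Y hY hFY =>
      hinj hY (closedBall_subset_ball hrd hYstar) (hFY.trans hFYstar.symm)

theorem stmt_15 {n : ℕ}
    (F : EuclideanSpace ℝ (Fin n) → EuclideanSpace ℝ (Fin n))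
    (F' : EuclideanSpace ℝ (Fin n) →
      EuclideanSpace ℝ (Fin n) →L[ℝ] EuclideanSpace ℝ (Fin n))
    (Ω : Set (EuclideanSpace ℝ (Fin n))) (hΩ : IsOpen Ω)
    (hF' : ∀ Y ∈ Ω, HasFDerivAt F (F' Y) Y)
    (hF'cont : ContinuousOn F' Ω)
    (Ybar : EuclideanSpace ℝ (Fin n)) (hYbar : Ybar ∈ Ω)
    (J : EuclideanSpace ℝ (Fin n) ≃L[ℝ] EuclideanSpace ℝ (Fin n))
    (hJ : (J : EuclideanSpace ℝ (Fin n) →L[ℝ] EuclideanSpace ℝ (Fin n)) = F' Ybar)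
    (r d ε μ : ℝ) (hr : 0 < r) (hd : 0 < d) (hε : 0 < ε) (hμ0 : 0 ≤ μ) (hμ1 : μ < 1)
    (hFnorm : ‖F Ybar‖ < r)
    (hinv : ‖(J.symm : EuclideanSpace ℝ (Fin n) →L[ℝ] EuclideanSpace ℝ (Fin n))‖ < d)
    (hball : Metric.ball Ybar ε ⊆ Ω)
    (hLip : ∀ Y ∈ Metric.ball Ybar ε, ‖F' Y - F' Ybar‖ < μ / d)
    (hrd : r * d / (1 - μ) < ε) :
    ∃ Ystar ∈ Metric.ball Ybar ε,
      F Ystar = 0 ∧ ‖Ybar - Ystar‖ ≤ r * d / (1 - μ) ∧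
      ∀ Y ∈ Metric.ball Ybar ε, F Y = 0 → Y = Ystar :=
  stmt_15_general F F' Ω hF' Ybar J hJ r d ε μ hr hd hμ0 hμ1 hFnorm hinv hball hLip hrd
end

section
/- Let F(Y) = kY + W·X(Y) + I − ω·I₀ on ℝⁿ with all diagonal weights equal to ω and 0 < a_{0i} < 1 for all i. Then there exists c > 0 such that for all |ω| > c the matrix W is invertible and the point Ȳ(ω) determined by X(Ȳ) = −W⁻¹(I − ω I₀) exists, is bounded, and satisfies lim_{|ω|→∞} Ȳ(ω) = ε·(ln(a_{01}/(1−a_{01})), ..., ln(a_{0n}/(1−a_{0n})))ᵀ. -/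
/-- Weight matrix with all diagonal entries equal to `ω` and fixed off-diagonal
entries `ω'`. -/
noncomputable def weightMat {n : ℕ} (ω' : Fin n → Fin n → ℝ) (ω : ℝ) :
    Matrix (Fin n) (Fin n) ℝ :=
  fun i j => if i = j then ω else ω' i j

open Filter Topology Matrix

noncomputable def logit (p : ℝ) : ℝ := Real.log (p / (1 - p))

lemma sigmoid_logit {p : ℝ} (hp : p ∈ Set.Ioo (0 : ℝ) 1) : sigmoid (logit p) = p := by
  obtain ⟨h0, h1⟩ := hp
  have h1' : 0 < 1 - p := by linarith
  rw [sigmoid, logit, Real.exp_neg, Real.exp_log (div_pos h0 h1'), inv_div]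
  field_simp
  ring

lemma continuousAt_logit {p : ℝ} (hp : p ∈ Set.Ioo (0 : ℝ) 1) : ContinuousAt logit p := by
  obtain ⟨h0, h1⟩ := hp
  have h1' : 0 < 1 - p := by linarith
  exact (continuousAt_id.div (continuousAt_const.sub continuousAt_id) h1'.ne').log
    (div_pos h0 h1').ne'

lemma tendsto_inv_comap_abs_atTop :
    Tendsto (fun ω : ℝ => ω⁻¹) (comap (fun ω : ℝ => |ω|) atTop) (𝓝[≠] 0) :=
  comap_norm_atTop (E := ℝ) ▸ tendsto_inv₀_cobounded'

lemma exists_pos_forall_lt_abs_of_eventually {p : ℝ → Prop}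
    (h : ∀ᶠ ω in comap (fun ω : ℝ => |ω|) atTop, p ω) : ∃ c > (0 : ℝ), ∀ ω, c < |ω| → p ω := by
  obtain ⟨c, hc⟩ := eventually_atTop.1 (eventually_comap.1 h)
  exact ⟨max c 1, by positivity, fun ω hω => hc |ω| ((le_max_left _ _).trans hω.le) ω rfl⟩

section Perturbation

variable {𝕜 m : Type*} [NontriviallyNormedField 𝕜] [Fintype m] [DecidableEq m]

lemma tendsto_inv_one_add_smul (B : Matrix m m 𝕜) :
    Tendsto (fun t : 𝕜 => (1 + t • B)⁻¹) (𝓝 0) (𝓝 1) := by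
  have hcont : Continuous fun t : 𝕜 => 1 + t • B := by fun_prop
  have hinv : ContinuousAt Inv.inv (1 : Matrix m m 𝕜) :=
    continuousAt_matrix_inv _ (by
      rw [det_one, Ring.inverse_eq_inv']
      exact continuousAt_inv₀ one_ne_zero)
  have h := hinv.tendsto.comp (hcont.tendsto' 0 1 (by simp))
  rw [inv_one] at h
  exact h

lemma eventually_isUnit_one_add_smul (B : Matrix m m 𝕜) :
    ∀ᶠ t in 𝓝 (0 : 𝕜), IsUnit (1 + t • B) := by
  have hdet : Continuous fun t : 𝕜 => (1 + t • B).det := by fun_prop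
  have := (hdet.tendsto' 0 1 (by simp)).eventually_ne one_ne_zero
  filter_upwards [this] with t ht
  exact (isUnit_iff_isUnit_det _).2 (isUnit_iff_ne_zero.2 ht)

lemma tendsto_inv_one_add_smul_mulVec (B : Matrix m m 𝕜) (u v : m → 𝕜) :
    Tendsto (fun t : 𝕜 => (1 + t • B)⁻¹ *ᵥ (u - t • v)) (𝓝 0) (𝓝 u) := by
  have hmulVec : Continuous fun p : Matrix m m 𝕜 × (m → 𝕜) => p.1 *ᵥ p.2 :=
    continuous_fst.matrix_mulVec continuous_snd
  have huv : Tendsto (fun t : 𝕜 => u - t • v) (𝓝 0) (𝓝 u) := by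
    have hcont : Continuous fun t : 𝕜 => u - t • v := by fun_prop
    simpa using hcont.tendsto 0
  have h := hmulVec.continuousAt.tendsto.comp ((tendsto_inv_one_add_smul B).prodMk_nhds huv)
  rw [one_mulVec] at h
  exact h

lemma neg_inv_smul_mulVec_sub_smul {B : Matrix m m 𝕜} {ω : 𝕜} (hω : ω ≠ 0)
    (hB : IsUnit (1 + ω⁻¹ • B)) (u v : m → 𝕜) :
    -((ω • (1 + ω⁻¹ • B))⁻¹ *ᵥ (v - ω • u)) = (1 + ω⁻¹ • B)⁻¹ *ᵥ (u - ω⁻¹ • v) := by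
  have hinv := inv_smul' (1 + ω⁻¹ • B) (Units.mk0 ω hω) ((isUnit_iff_isUnit_det _).1 hB)
  rw [Units.smul_def, Units.val_mk0] at hinv
  rw [hinv, Units.smul_def, Units.val_inv_eq_inv_val, Units.val_mk0, smul_mulVec, ← mulVec_smul,
    ← mulVec_neg]
  congr 1
  rw [smul_sub, smul_smul, inv_mul_cancel₀ hω, one_smul, neg_sub]

end Perturbation

lemma eventually_ne_zero_and_isUnit_one_add_inv_smul {m : Type*} [Fintype m] [DecidableEq m]
    (B : Matrix m m ℝ) :
    ∀ᶠ ω in comap (fun ω : ℝ => |ω|) atTop, ω ≠ 0 ∧ IsUnit (1 + ω⁻¹ • B) := by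
  have hne : ∀ᶠ t in 𝓝[≠] (0 : ℝ), t ≠ 0 := self_mem_nhdsWithin
  filter_upwards [tendsto_inv_comap_abs_atTop.eventually hne,
    tendsto_inv_comap_abs_atTop.eventually
      (nhdsWithin_le_nhds (eventually_isUnit_one_add_smul B))] with ω hω hU
  exact ⟨inv_eq_zero.not.1 hω, hU⟩

section WeightMat

variable {n : ℕ}

lemma weightMat_eq_smul (ω' : Fin n → Fin n → ℝ) {ω : ℝ} (hω : ω ≠ 0) :
    weightMat ω' ω = ω • (1 + ω⁻¹ • weightMat ω' 0) := by
  ext i j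
  by_cases h : i = j <;> simp [weightMat, one_apply, h, hω]

lemma eventually_isUnit_weightMat (ω' : Fin n → Fin n → ℝ) :
    ∀ᶠ ω in comap (fun ω : ℝ => |ω|) atTop, IsUnit (weightMat ω' ω) := by
  filter_upwards [eventually_ne_zero_and_isUnit_one_add_inv_smul (weightMat ω' 0)]
    with ω ⟨hω, hU⟩
  rw [weightMat_eq_smul ω' hω]
  simpa using hU.smul (Units.mk0 ω hω)

lemma tendsto_neg_weightMat_inv_mulVec (ω' : Fin n → Fin n → ℝ) (a a0 : Fin n → ℝ) :
    Tendsto (fun ω => -((weightMat ω' ω)⁻¹ *ᵥ (a - ω • a0)))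
      (comap (fun ω : ℝ => |ω|) atTop) (𝓝 a0) := by
  refine ((tendsto_inv_one_add_smul_mulVec (weightMat ω' 0) a0 a).comp
    (tendsto_inv_comap_abs_atTop.mono_right nhdsWithin_le_nhds)).congr' ?_
  filter_upwards [eventually_ne_zero_and_isUnit_one_add_inv_smul (weightMat ω' 0)]
    with ω ⟨hω, hU⟩
  rw [Function.comp_apply, weightMat_eq_smul ω' hω, neg_inv_smul_mulVec_sub_smul hω hU]

end WeightMat

theorem stmt_17 {n : ℕ} (ω' : Fin n → Fin n → ℝ) (a a0 : Fin n → ℝ)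
    (ha0 : ∀ i, a0 i ∈ Set.Ioo (0:ℝ) 1) (ε : ℝ) (hε : 0 < ε) :
    ∃ c > (0:ℝ), ∃ Ybar : ℝ → (Fin n → ℝ),
      (∀ ω : ℝ, c < |ω| →
        IsUnit (weightMat ω' ω) ∧
        ∀ i, sigmoid (Ybar ω i / ε) =
          (-(Matrix.mulVec (weightMat ω' ω)⁻¹ (a - ω • a0))) i) ∧
      (∃ M : ℝ, ∀ ω : ℝ, c < |ω| → ∀ i, |Ybar ω i| ≤ M) ∧
      Filter.Tendsto Ybar (Filter.comap (fun ω : ℝ => |ω|) Filter.atTop)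
        (nhds (fun i => ε * Real.log (a0 i / (1 - a0 i)))) := by
  set X := fun ω : ℝ => -((weightMat ω' ω)⁻¹ *ᵥ (a - ω • a0))
  have hX : Tendsto X (comap (fun ω : ℝ => |ω|) atTop) (𝓝 a0) :=
    tendsto_neg_weightMat_inv_mulVec ω' a a0
  set L : Fin n → ℝ := fun i => ε * logit (a0 i)
  set Ybar : ℝ → Fin n → ℝ := fun ω i => ε * logit (X ω i)
  have hY : Tendsto Ybar (comap (fun ω : ℝ => |ω|) atTop) (𝓝 L) := tendsto_pi_nhds.2 fun i =>
    ((continuousAt_logit (ha0 i)).tendsto.comp (tendsto_pi_nhds.1 hX i)).const_mul ε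
  have hXmem : ∀ᶠ ω in comap (fun ω : ℝ => |ω|) atTop, ∀ i, X ω i ∈ Set.Ioo (0 : ℝ) 1 :=
    eventually_all.2 fun i =>
      (tendsto_pi_nhds.1 hX i).eventually (Ioo_mem_nhds (ha0 i).1 (ha0 i).2)
  have hYbdd : ∀ᶠ ω in comap (fun ω : ℝ => |ω|) atTop, ‖Ybar ω‖ ≤ ‖L‖ + 1 :=
    hY.norm.eventually (eventually_le_nhds (lt_add_one _))
  obtain ⟨c, hc, hcω⟩ := exists_pos_forall_lt_abs_of_eventually
    ((eventually_isUnit_weightMat ω').and (hXmem.and hYbdd))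
  refine ⟨c, hc, Ybar, fun ω hω => ⟨(hcω ω hω).1, fun i => ?_⟩,
    ⟨‖L‖ + 1, fun ω hω i => ?_⟩, hY⟩
  · rw [mul_div_cancel_left₀ _ hε.ne']
    exact sigmoid_logit ((hcω ω hω).2.1 i)
  · exact (Real.norm_eq_abs _ ▸ norm_le_pi_norm (Ybar ω) i).trans (hcω ω hω).2.2
end
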